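/- (Generalized Wick theorem) For any two propagator matrices K and K′ and polynomials f₁,…,f_d in one variable: f₁(x₁) ⋆_K ⋯ ⋆_K f_d(x_d) = Σ_{k≥0} (ℏ^k/k!) Σ_{deg M = 2k} (k choose m₁₂,…,m_{d−1,d}) [f₁^{(α₁)}(x₁) ⋆_{K′} ⋯ ⋆_{K′} f_d^{(α_d)}(x_d)] · Π_{i<j} (K_{ij}−K′_{ij})^{m_{ij}}, with α_i = Σ_j m_{ij} and the inner sum over adjacency matrices of degree 2k. -/

import Mathlib

/- Statement 10 (generalized Wick theorem): for two propagator matrices `K, K′`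
and one-variable polynomials `f₁,…,f_d`,
`f₁(x₁) ⋆_K ⋯ ⋆_K f_d(x_d) = Σ_{k≥0} (ℏ^k/k!) Σ_{deg M = 2k}
(k choose m₁₂,…,m_{d−1,d}) [f₁^{(α₁)}(x₁) ⋆_{K′} ⋯ ⋆_{K′} f_d^{(α_d)}(x_d)]
Π_{i<j} (K_{ij}−K′_{ij})^{m_{ij}}`, with `α_i = Σ_j m_{ij}` and the inner sum
over adjacency matrices of degree `2k` (parameterized by their
upper-triangular parts). -/

open MvPolynomial

noncomputable section

variable {R : Type} [CommRing R] [Algebra ℚ R]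

/-- the finset of pairs `i < j`. -/
def pairs (d : ℕ) : Finset (Fin d × Fin d) :=
  Finset.univ.filter (fun p : Fin d × Fin d => p.1 < p.2)

/-- the operator `Σ_{i<j} K_{ij} ∂_i ∂_j`. -/
def Lop {d : ℕ} (K : Fin d → Fin d → R) :
    Module.End R (MvPolynomial (Fin d) R) :=
  ∑ p ∈ pairs d, K p.1 p.2 • ((pderiv p.1).toLinearMap ∘ₗ (pderiv p.2).toLinearMap)

/-- the row sums `α_i = Σ_j m_{ij}`. -/
def rowSum {d : ℕ} (M : Fin d × Fin d → ℕ) (i : Fin d) : ℕ :=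
  ∑ j : Fin d, (if i < j then M (i, j) else if j < i then M (j, i) else 0)

/-- `f₁(x₁) ⋆_K ⋯ ⋆_K f_d(x_d) = exp{ℏ Σ_{i<j} K_{ij} ∂_i∂_j}(f₁(x₁)⋯f_d(x_d))`. -/
def multiStar {d : ℕ} (ℏ : R) (K : Fin d → Fin d → R)
    (f : Fin d → Polynomial R) : MvPolynomial (Fin d) R :=
  finsum fun n : ℕ =>
    (n.factorial : ℚ)⁻¹ •
      (ℏ ^ n • ((Lop K ^ n) (∏ i : Fin d, Polynomial.aeval (X i) (f i))))

/-
On polynomials of total degree at most `N` the partial derivatives are commuting nilpotent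
endomorphisms. Hence `L_K = Σ_{i<j} K_{ij} ∂_i ∂_j` lives in a commutative algebra of nilpotent
operators, and `f₁(x₁) ⋆_K ⋯ ⋆_K f_d(x_d)` is the honest exponential `exp (ℏ L_K)` applied to
`f₁(x₁)⋯f_d(x_d)`. Since `L_K = L_{K'} + L_{K-K'}` with commuting summands,
`exp (ℏ L_K) = exp (ℏ L_{K'}) ∘ exp (ℏ L_{K-K'})`. The multinomial theorem expands `L_{K-K'}^k`
into the monomials `∏_{i<j} (K-K')_{ij}^{m_{ij}} ∏_i ∂_i^{α_i}`, and `∂_i` only differentiates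
the factor `f_i(x_i)`.
-/

open scoped IsMulCommutative

theorem IsNilpotent.map_exp_smul {A M M' F : Type*} [Ring A] [Module ℚ A] [AddCommGroup M]
    [Module A M] [Module ℚ M] [AddCommGroup M'] [Module ℚ M'] [FunLike F M M']
    [AddMonoidHomClass F M M'] {a : A} (ha : IsNilpotent a) (φ : F) (m : M) :
    φ (IsNilpotent.exp a • m) = ∑ᶠ n : ℕ, (n.factorial : ℚ)⁻¹ • φ (a ^ n • m) := by
  obtain ⟨k, hk⟩ := ha
  have h_supp : (Function.support fun n : ℕ => (n.factorial : ℚ)⁻¹ • φ (a ^ n • m)) ⊆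
      Finset.range k := by
    intro n hn
    rw [Finset.coe_range, Set.mem_Iio]
    by_contra! hkn
    apply Function.mem_support.mp hn
    rw [pow_eq_zero_of_le hkn hk, zero_smul, map_zero, smul_zero]
  rw [finsum_eq_sum_of_support_subset _ h_supp,
    IsNilpotent.exp_smul_eq_sum (k := k) (by rw [hk, zero_smul]) ⟨k, hk⟩, map_sum]
  simp only [map_rat_smul]

namespace MvPolynomial

variable {σ S : Type*} [CommSemiring S]

theorem pderiv_comm (i j : σ) (p : MvPolynomial σ S) :
    pderiv i (pderiv j p) = pderiv j (pderiv i p) := by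
  classical
  induction p using MvPolynomial.induction_on with
  | C a => simp
  | add p q hp hq => simp [hp, hq]
  | mul_X p k hp =>
    simp only [pderiv_mul, pderiv_X, map_add, hp, Pi.single_apply, apply_ite (pderiv _),
      pderiv_one, map_zero, ite_self, mul_zero]
    ring

theorem restrictTotalDegree_mono {m n : ℕ} (h : m ≤ n) :
    restrictTotalDegree σ S m ≤ restrictTotalDegree σ S n := fun p hp => by
  rw [mem_restrictTotalDegree] at hp ⊢
  omega

theorem pderiv_mem_restrictTotalDegree {n : ℕ} (i : σ) {p : MvPolynomial σ S}
    (hp : p ∈ restrictTotalDegree σ S (n + 1)) : pderiv i p ∈ restrictTotalDegree σ S n := by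
  classical
  rw [restrictTotalDegree, mem_restrictSupport_iff] at hp ⊢
  intro m hm
  rw [Finset.mem_coe, mem_support_iff, coeff_pderiv] at hm
  have hm' := hp (mem_support_iff.mpr (left_ne_zero_of_mul hm))
  simp only [Set.mem_ofPred_eq] at hm' ⊢
  rw [Finsupp.sum_add_index' (fun _ => rfl) (fun _ _ _ => rfl),
    Finsupp.sum_single_index rfl] at hm'
  omega

theorem pderiv_eq_zero_of_mem_restrictTotalDegree_zero (i : σ) {p : MvPolynomial σ S}
    (hp : p ∈ restrictTotalDegree σ S 0) : pderiv i p = 0 := by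
  rw [mem_restrictTotalDegree, Nat.le_zero, totalDegree_eq_zero_iff_eq_C] at hp
  rw [hp, pderiv_C]

theorem iterate_pderiv_eq_zero {n : ℕ} (i : σ) {p : MvPolynomial σ S}
    (hp : p ∈ restrictTotalDegree σ S n) : (pderiv i)^[n + 1] p = 0 := by
  induction n generalizing p with
  | zero => exact pderiv_eq_zero_of_mem_restrictTotalDegree_zero i hp
  | succ n ih => exact ih (pderiv_mem_restrictTotalDegree i hp)

variable (S) in
def pderivOn (N : ℕ) (i : σ) : Module.End S (restrictTotalDegree σ S N) :=
  (pderiv i).toLinearMap.restrict fun _ hp =>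
    pderiv_mem_restrictTotalDegree i (restrictTotalDegree_mono N.le_succ hp)

@[simp]
theorem coe_pderivOn_apply (N : ℕ) (i : σ) (v : restrictTotalDegree σ S N) :
    (pderivOn S N i v : MvPolynomial σ S) = pderiv i v := rfl

theorem coe_pderivOn_pow_apply (N n : ℕ) (i : σ) (v : restrictTotalDegree σ S N) :
    ((pderivOn S N i ^ n) v : MvPolynomial σ S) = (pderiv i)^[n] v := by
  induction n with
  | zero => rfl
  | succ n ih =>
    rw [pow_succ', Module.End.mul_apply, coe_pderivOn_apply, ih, Function.iterate_succ_apply']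

theorem pderivOn_commute (N : ℕ) (i j : σ) : Commute (pderivOn S N i) (pderivOn S N j) := by
  refine (LinearMap.ext fun v => ?_ : pderivOn S N i * pderivOn S N j = _)
  ext1
  simp only [Module.End.mul_apply, coe_pderivOn_apply]
  exact pderiv_comm i j (v : MvPolynomial σ S)

theorem pderivOn_pow_eq_zero (N : ℕ) (i : σ) : pderivOn S N i ^ (N + 1) = 0 := by
  refine LinearMap.ext fun v => ?_
  ext1
  rw [coe_pderivOn_pow_apply, iterate_pderiv_eq_zero i v.2, LinearMap.zero_apply,
    Submodule.coe_zero]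

theorem totalDegree_aeval_X_le (j : σ) (g : Polynomial S) :
    (Polynomial.aeval (X j : MvPolynomial σ S) g).totalDegree ≤ g.natDegree := by
  rw [Polynomial.aeval_eq_sum_range]
  refine (totalDegree_finsetSum _ _).trans (Finset.sup_le fun k hk => ?_)
  refine (totalDegree_smul_le _ _).trans ?_
  rw [X_pow_eq_monomial]
  refine (totalDegree_monomial_le _ _).trans ?_
  rw [Finsupp.sum_single_index rfl]
  exact Nat.lt_succ_iff.mp (Finset.mem_range.mp hk)

section Fintype

variable [Fintype σ]

theorem prod_aeval_X_mem_restrictTotalDegree (f : σ → Polynomial S) :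
    ∏ j, Polynomial.aeval (X j) (f j) ∈ restrictTotalDegree σ S (∑ j, (f j).natDegree) := by
  rw [mem_restrictTotalDegree]
  exact (totalDegree_finsetProd _ _).trans
    (Finset.sum_le_sum fun j _ => totalDegree_aeval_X_le j (f j))

variable [DecidableEq σ]

theorem pderiv_prod_aeval_X (i : σ) (f : σ → Polynomial S) :
    pderiv i (∏ j, Polynomial.aeval (X j : MvPolynomial σ S) (f j)) =
      ∏ j, Polynomial.aeval (X j) (Function.update f i (Polynomial.derivative (f i)) j) := by
  have h_rest : pderiv i
      (∏ j ∈ Finset.univ.erase i, Polynomial.aeval (X j : MvPolynomial σ S) (f j)) = 0 := by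
    refine Finset.prod_induction _ (fun q => pderiv i q = 0)
      (fun a b ha hb => by rw [pderiv_mul, ha, hb, mul_zero, zero_mul, add_zero]) pderiv_one
      fun j hj => ?_
    rw [Derivation.map_aeval, pderiv_X_of_ne (Finset.ne_of_mem_erase hj), smul_zero]
  rw [← Finset.mul_prod_erase _ _ (Finset.mem_univ i),
    ← Finset.mul_prod_erase _ _ (Finset.mem_univ i), pderiv_mul, h_rest, mul_zero, add_zero,
    Derivation.map_aeval, pderiv_X_self, smul_eq_mul, mul_one, Function.update_self]
  congr 1
  exact Finset.prod_congr rfl fun j hj => by rw [Function.update_of_ne (Finset.ne_of_mem_erase hj)]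

theorem iterate_pderiv_prod_aeval_X (i : σ) (n : ℕ) (f : σ → Polynomial S) :
    (pderiv i)^[n] (∏ j, Polynomial.aeval (X j : MvPolynomial σ S) (f j)) =
      ∏ j, Polynomial.aeval (X j) (Function.update f i (Polynomial.derivative^[n] (f i)) j) := by
  induction n with
  | zero => simp
  | succ n ih =>
    rw [Function.iterate_succ_apply', ih, pderiv_prod_aeval_X, Function.update_idem,
      Function.update_self, Function.iterate_succ_apply']

end Fintype

variable (σ S) in
abbrev pderivAlgebra (N : ℕ) : Subalgebra S (Module.End S (restrictTotalDegree σ S N)) :=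
  Algebra.adjoin S (Set.range (pderivOn S N))

instance (N : ℕ) : IsMulCommutative (pderivAlgebra σ S N) :=
  Algebra.isMulCommutative_adjoin S <| by
    rintro _ ⟨i, rfl⟩ _ ⟨j, rfl⟩
    exact pderivOn_commute N i j

variable (S) in
def pderivAlgebra.gen (N : ℕ) (i : σ) : pderivAlgebra σ S N :=
  ⟨pderivOn S N i, Algebra.subset_adjoin ⟨i, rfl⟩⟩

namespace pderivAlgebra

variable (N : ℕ)

theorem gen_pow_eq_zero (i : σ) : gen S N i ^ (N + 1) = 0 :=
  Subtype.ext <| (SubmonoidClass.coe_pow _ _).trans (pderivOn_pow_eq_zero N i)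

theorem coe_gen_pow_apply (i : σ) (n : ℕ) (v : restrictTotalDegree σ S N) :
    ((gen S N i ^ n).val v : MvPolynomial σ S) = (pderiv i)^[n] v := by
  rw [SubmonoidClass.coe_pow]
  exact coe_pderivOn_pow_apply N n i v

theorem coe_prod_gen_pow_apply [Fintype σ] [DecidableEq σ] (α : σ → ℕ)
    (f : σ → Polynomial S) (v : restrictTotalDegree σ S N)
    (hv : (v : MvPolynomial σ S) = ∏ j, Polynomial.aeval (X j) (f j)) :
    ((∏ i, gen S N i ^ α i).val v : MvPolynomial σ S) =
      ∏ j, Polynomial.aeval (X j) (Polynomial.derivative^[α j] (f j)) := by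
  suffices h : ∀ s : Finset σ, ((∏ i ∈ s, gen S N i ^ α i).val v : MvPolynomial σ S) =
      ∏ j, Polynomial.aeval (X j) (s.piecewise (fun j => Polynomial.derivative^[α j] (f j)) f j) by
    simpa using h Finset.univ
  intro s
  induction s using Finset.induction_on with
  | empty => simp [hv]
  | insert a s ha ih =>
    rw [Finset.prod_insert ha, MulMemClass.coe_mul, Module.End.mul_apply, coe_gen_pow_apply, ih,
      iterate_pderiv_prod_aeval_X, Finset.piecewise_insert, Finset.piecewise_eq_of_notMem _ _ _ ha]

end pderivAlgebra

end MvPolynomial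

theorem prod_pairs_mul_pow_eq_prod_pow_rowSum {d : ℕ} {M : Type*} [CommMonoid M]
    (x : Fin d → M) (m : Fin d × Fin d → ℕ) :
    ∏ p ∈ pairs d, (x p.1 * x p.2) ^ m p = ∏ i, x i ^ rowSum m i := by
  have h_swap : ∏ p ∈ pairs d, x p.2 ^ m p =
      ∏ q : Fin d × Fin d, if q.2 < q.1 then x q.1 ^ m q.swap else 1 := by
    rw [pairs, Finset.prod_filter]
    exact Fintype.prod_equiv (Equiv.prodComm _ _) _ _ fun q => rfl
  calc ∏ p ∈ pairs d, (x p.1 * x p.2) ^ m p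
      = (∏ q : Fin d × Fin d, if q.1 < q.2 then x q.1 ^ m q else 1) *
          ∏ q : Fin d × Fin d, if q.2 < q.1 then x q.1 ^ m q.swap else 1 := by
        rw [← h_swap, ← Finset.prod_filter, ← pairs, ← Finset.prod_mul_distrib]
        simp only [mul_pow]
    _ = ∏ i, ∏ j,
          (if i < j then x i ^ m (i, j) else 1) * (if j < i then x i ^ m (j, i) else 1) := by
        rw [← Finset.prod_mul_distrib, ← Finset.univ_product_univ, Finset.prod_product]
        rfl
    _ = ∏ i, x i ^ rowSum m i := by
        refine Finset.prod_congr rfl fun i _ => ?_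
        rw [rowSum, ← Finset.prod_pow_eq_pow_sum]
        refine Finset.prod_congr rfl fun j _ => ?_
        rcases lt_trichotomy i j with h | rfl | h
        · simp [h, h.not_gt]
        · simp
        · simp [h, h.not_gt]

section Propagator

variable {d : ℕ} (N : ℕ)

def propagatorOp {S : Type*} [CommSemiring S] (K : Fin d → Fin d → S) :
    pderivAlgebra (Fin d) S N :=
  ∑ p ∈ pairs d, K p.1 p.2 • (pderivAlgebra.gen S N p.1 * pderivAlgebra.gen S N p.2)

section CommSemiring

variable {S : Type*} [CommSemiring S]

theorem propagatorOp_add (K K' : Fin d → Fin d → S) :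
    propagatorOp N (K + K') = propagatorOp N K + propagatorOp N K' := by
  simp only [propagatorOp, Pi.add_apply, add_smul, Finset.sum_add_distrib]

theorem isNilpotent_propagatorOp (K : Fin d → Fin d → S) : IsNilpotent (propagatorOp N K) :=
  isNilpotent_sum fun p _ =>
    ((Commute.all _ _).isNilpotent_mul_left ⟨_, pderivAlgebra.gen_pow_eq_zero N p.2⟩).smul _

theorem isNilpotent_val_smul_propagatorOp (ℏ : S) (K : Fin d → Fin d → S) :
    IsNilpotent (ℏ • propagatorOp N K).val :=
  ((isNilpotent_propagatorOp N K).smul ℏ).map (pderivAlgebra (Fin d) S N).val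

theorem propagatorOp_pow (c : Fin d → Fin d → S) (k : ℕ) :
    propagatorOp N c ^ k = ∑ M ∈ Finset.piAntidiag (pairs d) k, Nat.multinomial (pairs d) M •
      ((∏ p ∈ pairs d, c p.1 p.2 ^ M p) • ∏ i, pderivAlgebra.gen S N i ^ rowSum M i) := by
  rw [propagatorOp, Finset.sum_pow_eq_sum_piAntidiag]
  refine Finset.sum_congr rfl fun M _ => ?_
  rw [← prod_pairs_mul_pow_eq_prod_pow_rowSum, ← Finset.prod_smul, nsmul_eq_mul]
  simp only [smul_pow]

end CommSemiring

section CommRing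

variable {S : Type} [CommRing S]

theorem coe_propagatorOp_apply (K : Fin d → Fin d → S) (v : restrictTotalDegree (Fin d) S N) :
    ((propagatorOp N K).val v : MvPolynomial (Fin d) S) = Lop K v := by
  simp only [propagatorOp, Lop, AddSubmonoidClass.coe_finsetSum, Subalgebra.coe_smul,
    LinearMap.sum_apply, LinearMap.smul_apply, Submodule.coe_smul]
  rfl

theorem coe_propagatorOp_pow_apply (K : Fin d → Fin d → S) (n : ℕ)
    (v : restrictTotalDegree (Fin d) S N) :
    (((propagatorOp N K).val ^ n) v : MvPolynomial (Fin d) S) = (Lop K ^ n) v := by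
  induction n generalizing v with
  | zero => rfl
  | succ n ih =>
    rw [pow_succ, Module.End.mul_apply, ih, coe_propagatorOp_apply, pow_succ, Module.End.mul_apply]

end CommRing

theorem exp_val_smul_propagatorOp (ℏ : R) (K K' : Fin d → Fin d → R) :
    IsNilpotent.exp (ℏ • propagatorOp N K).val =
      IsNilpotent.exp (ℏ • propagatorOp N K').val *
        IsNilpotent.exp (ℏ • propagatorOp N fun i j => K i j - K' i j).val := by
  have h_split : ℏ • propagatorOp N K =
      ℏ • propagatorOp N K' + ℏ • propagatorOp N fun i j => K i j - K' i j := by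
    rw [← smul_add, ← propagatorOp_add]
    congr
    ext i j
    simp
  rw [h_split, Subalgebra.coe_add]
  exact IsNilpotent.exp_add_of_commute ((Commute.all (ℏ • propagatorOp N K')
    (ℏ • propagatorOp N fun i j => K i j - K' i j)).map (pderivAlgebra (Fin d) R N).val)
    (isNilpotent_val_smul_propagatorOp N ℏ K') (isNilpotent_val_smul_propagatorOp N ℏ _)

theorem multiStar_eq_coe_exp_apply (ℏ : R) (K : Fin d → Fin d → R) (f : Fin d → Polynomial R)
    (v : restrictTotalDegree (Fin d) R N)
    (hv : (v : MvPolynomial (Fin d) R) = ∏ i, Polynomial.aeval (X i) (f i)) :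
    multiStar ℏ K f = IsNilpotent.exp (ℏ • propagatorOp N K).val v := by
  have h := IsNilpotent.map_exp_smul (A := Module.End R (restrictTotalDegree (Fin d) R N))
    (isNilpotent_val_smul_propagatorOp N ℏ K) (restrictTotalDegree (Fin d) R N).subtype v
  simp only [Submodule.subtype_apply, Module.End.smul_def] at h
  rw [h, multiStar]
  refine finsum_congr fun n => ?_
  rw [Subalgebra.coe_smul, smul_pow, LinearMap.smul_apply, Submodule.coe_smul,
    coe_propagatorOp_pow_apply, hv]

theorem coe_exp_apply_propagatorOp_pow_apply (ℏ : R) (c K' : Fin d → Fin d → R)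
    (f : Fin d → Polynomial R) (v : restrictTotalDegree (Fin d) R N)
    (hv : (v : MvPolynomial (Fin d) R) = ∏ i, Polynomial.aeval (X i) (f i)) (k : ℕ) :
    (IsNilpotent.exp (ℏ • propagatorOp N K').val (((ℏ • propagatorOp N c).val ^ k) v) :
        MvPolynomial (Fin d) R) =
      ℏ ^ k • ∑ M ∈ Finset.piAntidiag (pairs d) k, Nat.multinomial (pairs d) M •
        (multiStar ℏ K' (fun i => Polynomial.derivative^[rowSum M i] (f i)) *
          ∏ p ∈ pairs d, C (c p.1 p.2) ^ M p) := by
  set E := IsNilpotent.exp (ℏ • propagatorOp N K').val with hE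
  rw [← SubmonoidClass.coe_pow, smul_pow, propagatorOp_pow, Finset.smul_sum,
    AddSubmonoidClass.coe_finsetSum, LinearMap.sum_apply, map_sum, Submodule.coe_sum,
    Finset.smul_sum]
  refine Finset.sum_congr rfl fun M _ => ?_
  simp only [Subalgebra.coe_smul, LinearMap.smul_apply, map_smul, map_nsmul,
    Submodule.coe_smul_of_tower]
  rw [hE, ← multiStar_eq_coe_exp_apply N ℏ K' _ _
    (pderivAlgebra.coe_prod_gen_pow_apply N _ f v hv)]
  congr 2
  rw [smul_eq_C_mul, mul_comm, map_prod]
  simp only [map_pow]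

end Propagator

/-- the generalized Wick theorem relating `⋆_K` and `⋆_{K′}`. -/
theorem generalized_wick {d : ℕ} (ℏ : R) (K K' : Fin d → Fin d → R)
    (f : Fin d → Polynomial R) :
    multiStar ℏ K f =
      finsum fun k : ℕ =>
        (k.factorial : ℚ)⁻¹ •
          (ℏ ^ k •
            ∑ M ∈ Finset.piAntidiag (pairs d) k,
              Nat.multinomial (pairs d) M •
                (multiStar ℏ K' (fun i => Polynomial.derivative^[rowSum M i] (f i)) *
                  ∏ p ∈ pairs d, C (K p.1 p.2 - K' p.1 p.2) ^ M p)) := by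
  set N := ∑ i, (f i).natDegree
  set v : restrictTotalDegree (Fin d) R N := ⟨_, prod_aeval_X_mem_restrictTotalDegree f⟩
  have h_exp := IsNilpotent.map_exp_smul (A := Module.End R (restrictTotalDegree (Fin d) R N))
    (isNilpotent_val_smul_propagatorOp N ℏ fun i j => K i j - K' i j)
    ((restrictTotalDegree (Fin d) R N).subtype ∘ₗ IsNilpotent.exp (ℏ • propagatorOp N K').val) v
  simp only [LinearMap.comp_apply, Submodule.subtype_apply, Module.End.smul_def] at h_exp
  rw [multiStar_eq_coe_exp_apply N ℏ K f v rfl, exp_val_smul_propagatorOp N ℏ K K',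
    Module.End.mul_apply, h_exp]
  exact finsum_congr fun k => by rw [coe_exp_apply_propagatorOp_pow_apply N ℏ _ K' f v rfl]

end
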